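/- arXiv:2512.12606 — 3 statements merged into one kernel-verified Lean document; each statement's English description precedes it below -/
import Mathlib

section
/- Let S = {n ∈ ℕ : n ≥ k} and let f be an automorphism of P(S). Then f({k, k+2, k+3}) equals either {k, k+2, k+3} or {k, k+1, k+3}. -/
open Pointwise

/-- The power semigroup `P(S)`: finite nonempty subsets of `S`. -/
def PS (S : Set ℕ) : Set (Finset ℕ) := {X | X.Nonempty ∧ (X : Set ℕ) ⊆ S}

/-- `f` is an automorphism of the power semigroup `P(S)`:
an additive bijection of `P(S)` (setwise addition). -/
def IsPowerAut (S : Set ℕ) (f : Finset ℕ → Finset ℕ) : Prop :=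
  (∀ X ∈ PS S, f X ∈ PS S) ∧
  (∀ X ∈ PS S, ∀ Y ∈ PS S, f X = f Y → X = Y) ∧
  (∀ Y ∈ PS S, ∃ X ∈ PS S, f X = Y) ∧
  (∀ X ∈ PS S, ∀ Y ∈ PS S, f (X + Y) = f X + f Y)

/-- `S` is a numerical semigroup: a subsemigroup of `(ℕ, +)` with finite complement. -/
def IsNumSgp (S : Set ℕ) : Prop :=
  (∀ a ∈ S, ∀ b ∈ S, a + b ∈ S) ∧ (Sᶜ).Finite

/-- `k` is the critical element of `S`: the least `k` with `[k, ∞) ⊆ S`. -/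
def IsCritical (S : Set ℕ) (k : ℕ) : Prop :=
  (∀ n, k ≤ n → n ∈ S) ∧ ∀ j, (∀ n, j ≤ n → n ∈ S) → k ≤ j

namespace Stmt14
open Finset

lemma mem_PS' {k : ℕ} {X : Finset ℕ} :
    X ∈ PS {n | k ≤ n} ↔ X.Nonempty ∧ ∀ n ∈ X, k ≤ n := by
  simp [PS, Set.subset_def]

lemma min'_eq {X : Finset ℕ} (hne : X.Nonempty) {a : ℕ} (ha : a ∈ X)
    (h : ∀ x ∈ X, a ≤ x) : X.min' hne = a :=
  le_antisymm (Finset.min'_le _ _ ha) (Finset.le_min' _ _ _ h)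

lemma max'_eq {X : Finset ℕ} (hne : X.Nonempty) {a : ℕ} (ha : a ∈ X)
    (h : ∀ x ∈ X, x ≤ a) : X.max' hne = a :=
  le_antisymm (Finset.max'_le _ _ _ h) (Finset.le_max' _ _ ha)

lemma min'_add {X Y : Finset ℕ} (hX : X.Nonempty) (hY : Y.Nonempty) :
    (X + Y).min' (hX.add hY) = X.min' hX + Y.min' hY := by
  apply le_antisymm
  · exact Finset.min'_le _ _ (Finset.add_mem_add (X.min'_mem hX) (Y.min'_mem hY))
  · apply Finset.le_min'
    intro z hz
    rw [Finset.mem_add] at hz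
    obtain ⟨x, hx, y, hy, rfl⟩ := hz
    exact add_le_add (Finset.min'_le _ _ hx) (Finset.min'_le _ _ hy)

lemma max'_add {X Y : Finset ℕ} (hX : X.Nonempty) (hY : Y.Nonempty) :
    (X + Y).max' (hX.add hY) = X.max' hX + Y.max' hY := by
  apply le_antisymm
  · apply Finset.max'_le
    intro z hz
    rw [Finset.mem_add] at hz
    obtain ⟨x, hx, y, hy, rfl⟩ := hz
    exact add_le_add (Finset.le_max' _ _ hx) (Finset.le_max' _ _ hy)
  · exact Finset.le_max' _ _ (Finset.add_mem_add (X.max'_mem hX) (Y.max'_mem hY))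

lemma add_mem_PS {k : ℕ} {X Y : Finset ℕ} (hX : X ∈ PS {n | k ≤ n})
    (hY : Y ∈ PS {n | k ≤ n}) : X + Y ∈ PS {n | k ≤ n} := by
  obtain ⟨hX1, hX2⟩ := mem_PS'.1 hX
  obtain ⟨hY1, hY2⟩ := mem_PS'.1 hY
  refine mem_PS'.2 ⟨hX1.add hY1, ?_⟩
  intro n hn
  rw [Finset.mem_add] at hn
  obtain ⟨x, hx, y, hy, rfl⟩ := hn
  have := hX2 x hx; have := hY2 y hy; omega

lemma singleton_mem_PS {k n : ℕ} (h : k ≤ n) : ({n} : Finset ℕ) ∈ PS {n | k ≤ n} :=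
  mem_PS'.2 ⟨⟨n, by simp⟩, by simp [h]⟩

lemma Icc_mem_PS {k a b : ℕ} (h1 : k ≤ a) (h2 : a ≤ b) :
    Finset.Icc a b ∈ PS {n | k ≤ n} := by
  refine mem_PS'.2 ⟨⟨a, by simp [h2]⟩, ?_⟩
  intro n hn
  rw [Finset.mem_Icc] at hn
  omega

lemma add_Icc {X : Finset ℕ} {a b c L : ℕ} (ha : a ∈ X) (hb : b ∈ X)
    (hX : ∀ x ∈ X, a ≤ x ∧ x ≤ b) (hL : b ≤ a + L) :
    X + Finset.Icc c (c + L) = Finset.Icc (a + c) (b + c + L) := by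
  ext p
  simp only [Finset.mem_add, Finset.mem_Icc]
  constructor
  · rintro ⟨x, hx, y, hy, rfl⟩
    have := hX x hx; omega
  · intro hp
    by_cases h : p ≤ a + c + L
    · exact ⟨a, ha, p - a, by omega, by omega⟩
    · exact ⟨b, hb, p - b, by omega, by omega⟩

lemma add_Icc_erase {X : Finset ℕ} {a D c : ℕ} (ha : a ∈ X) (hb : a + D ∈ X)
    (hX : ∀ x ∈ X, a ≤ x ∧ x ≤ a + D) (hD : 1 ≤ D) :
    X + (Finset.Icc c (c + 2*D)).erase (c + D) = Finset.Icc (a + c) (a + D + c + 2*D) := by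
  ext p
  simp only [Finset.mem_add, Finset.mem_erase, Finset.mem_Icc]
  constructor
  · rintro ⟨x, hx, y, hy, rfl⟩
    have := hX x hx; omega
  · intro hp
    by_cases h1 : p = a + c + D
    · exact ⟨a + D, hb, c, ⟨by omega, by omega⟩, by omega⟩
    · by_cases h2 : p ≤ a + c + 2*D
      · exact ⟨a, ha, p - a, ⟨by omega, by omega⟩, by omega⟩
      · exact ⟨a + D, hb, p - (a + D), ⟨by omega, by omega⟩, by omega⟩

/-- every non-singleton member of `PS` fails cancellation -/
lemma noncancel {k : ℕ} {X : Finset ℕ} (hX : X ∈ PS {n | k ≤ n}) {x1 x2 : ℕ}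
    (h1 : x1 ∈ X) (h2 : x2 ∈ X) (hne : x1 ≠ x2) :
    ∃ Y ∈ PS {n | k ≤ n}, ∃ Z ∈ PS {n | k ≤ n}, Y ≠ Z ∧ X + Y = X + Z := by
  obtain ⟨hX1, hX2⟩ := mem_PS'.1 hX
  set a := X.min' hX1 with hadef
  set b := X.max' hX1 with hbdef
  have hab : a < b := by
    rcases lt_or_ge a b with h | h
    · exact h
    · exfalso
      have e1 : x1 = a := le_antisymm (by
        have := Finset.le_max' X x1 h1; omega) (Finset.min'_le _ _ h1)
      have e2 : x2 = a := le_antisymm (by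
        have := Finset.le_max' X x2 h2; omega) (Finset.min'_le _ _ h2)
      exact hne (e1.trans e2.symm)
  set D := b - a with hDdef
  have hD : 1 ≤ D := by omega
  have hbound : ∀ x ∈ X, a ≤ x ∧ x ≤ a + D := by
    intro x hx
    have := Finset.min'_le _ _ hx
    have := Finset.le_max' _ _ hx
    omega
  have hbX : a + D ∈ X := by
    have : a + D = b := by omega
    rw [this]; exact Finset.max'_mem _ _
  refine ⟨Finset.Icc k (k + 2*D), Icc_mem_PS le_rfl (by omega), 
    (Finset.Icc k (k + 2*D)).erase (k + D), ?_, ?_, ?_⟩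
  · refine mem_PS'.2 ⟨⟨k, ?_⟩, ?_⟩
    · rw [Finset.mem_erase, Finset.mem_Icc]; omega
    · intro n hn
      rw [Finset.mem_erase, Finset.mem_Icc] at hn; omega
  · intro h
    have : k + D ∈ (Finset.Icc k (k + 2*D)).erase (k + D) := by
      rw [← h, Finset.mem_Icc]; omega
    rw [Finset.mem_erase] at this
    exact this.1 rfl
  · rw [add_Icc (X.min'_mem hX1) hbX (by intro x hx; exact hbound x hx) (by omega),
      add_Icc_erase (X.min'_mem hX1) hbX hbound hD]



variable {k : ℕ} {f : Finset ℕ → Finset ℕ}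

lemma singleton_cancel {n : ℕ} {Y Z : Finset ℕ} (h : ({n} : Finset ℕ) + Y = {n} + Z) :
    Y = Z := by
  rw [Finset.singleton_add, Finset.singleton_add] at h
  exact Finset.image_injective (add_right_injective n) h

/-- a set is a singleton iff its `min'` equals its `max'` -/
lemma eq_singleton_of_min_max {X : Finset ℕ} (hne : X.Nonempty)
    (h : X.min' hne = X.max' hne) : X = {X.min' hne} := by
  ext x
  simp only [Finset.mem_singleton]
  constructor
  · intro hx
    have := Finset.min'_le _ _ hx
    have := Finset.le_max' _ _ hx
    omega
  · rintro rfl; exact X.min'_mem hne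

lemma two_elts_of_not_singleton {X : Finset ℕ} (hne : X.Nonempty)
    (h : ∀ n, X ≠ {n}) : ∃ x1 ∈ X, ∃ x2 ∈ X, x1 ≠ x2 := by
  by_cases he : X.min' hne = X.max' hne
  · exact absurd (eq_singleton_of_min_max hne he) (h _)
  · exact ⟨_, X.min'_mem hne, _, X.max'_mem hne, he⟩

/-- `f` maps singletons to singletons -/
lemma f_sing_to_sing (hf : IsPowerAut {n | k ≤ n} f) {n : ℕ} (hn : k ≤ n) :
    ∃ m, k ≤ m ∧ f {n} = {m} := by
  obtain ⟨hmaps, hinj, hsurj, hadd⟩ := hf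
  have hXPS := singleton_mem_PS hn
  have hfPS := hmaps _ hXPS
  obtain ⟨hfne, hfk⟩ := mem_PS'.1 hfPS
  by_cases hs : ∀ m, f {n} ≠ {m}
  · exfalso
    obtain ⟨x1, h1, x2, h2, h12⟩ := two_elts_of_not_singleton hfne hs
    obtain ⟨Y, hY, Z, hZ, hYZ, hsum⟩ := noncancel hfPS h1 h2 h12
    obtain ⟨Y0, hY0, rfl⟩ := hsurj Y hY
    obtain ⟨Z0, hZ0, rfl⟩ := hsurj Z hZ
    rw [← hadd _ hXPS _ hY0, ← hadd _ hXPS _ hZ0] at hsum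
    have := hinj _ (add_mem_PS hXPS hY0) _ (add_mem_PS hXPS hZ0) hsum
    exact hYZ (congrArg f (singleton_cancel this))
  · push_neg at hs
    obtain ⟨m, hm⟩ := hs
    refine ⟨m, ?_, hm⟩
    have : m ∈ f {n} := by rw [hm]; simp
    exact hfk _ this

/-- preimages of singletons are singletons -/
lemma f_sing_of_sing (hf : IsPowerAut {n | k ≤ n} f) {X : Finset ℕ}
    (hX : X ∈ PS {n | k ≤ n}) {m : ℕ} (hm : f X = {m}) : ∃ n, X = {n} := by
  obtain ⟨hmaps, hinj, hsurj, hadd⟩ := hf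
  by_contra hs
  push_neg at hs
  obtain ⟨hne, hk⟩ := mem_PS'.1 hX
  obtain ⟨x1, h1, x2, h2, h12⟩ := two_elts_of_not_singleton hne hs
  obtain ⟨Y, hY, Z, hZ, hYZ, hsum⟩ := noncancel hX h1 h2 h12
  have : f X + f Y = f X + f Z := by
    rw [← hadd _ hX _ hY, ← hadd _ hX _ hZ, hsum]
  rw [hm] at this
  have := singleton_cancel this
  exact hYZ (hinj _ hY _ hZ this)

/-- affine rigidity: a "midpoint-affine" injective surjection of `[k,∞)` is the identity -/
lemma affine (k : ℕ) (τ : ℕ → ℕ) (hrec : ∀ m, τ m + τ (m + 2) = 2 * τ (m + 1))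
    (hinj : ∀ m m', τ m = τ m' → m = m') (hk : ∀ m, k ≤ τ m)
    (hsurj : ∀ n, k ≤ n → ∃ m, τ m = n) : ∀ m, τ m = k + m := by
  have key : ∀ m, τ m + m * τ 0 = τ 0 + m * τ 1 := by
    intro m
    induction m using Nat.strong_induction_on with
    | _ m ih =>
      match m with
      | 0 => ring
      | 1 => ring
      | (m + 2) =>
        have i1 := ih m (by omega)
        have i2 := ih (m + 1) (by omega)
        have h := hrec m
        have e0 : (m + 2) * τ 0 = m * τ 0 + 2 * τ 0 := by ring
        have e1 : (m + 2) * τ 1 = m * τ 1 + 2 * τ 1 := by ring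
        have e2 : (m + 1) * τ 0 = m * τ 0 + τ 0 := by ring
        have e3 : (m + 1) * τ 1 = m * τ 1 + τ 1 := by ring
        omega
  rcases lt_trichotomy (τ 1) (τ 0) with h | h | h
  · exfalso
    have hK := key (τ 0 + 1)
    have h1 := hk (τ 0 + 1)
    nlinarith
  · exact absurd (hinj _ _ h.symm) (by omega)
  · set d := τ 1 - τ 0 with hd
    have hd1 : 1 ≤ d := by omega
    have hτ : ∀ m, τ m = τ 0 + m * d := by
      intro m
      have hK := key m
      have e : m * τ 1 = m * τ 0 + m * d := by
        have : τ 1 = τ 0 + d := by omega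
        rw [this]; ring
      omega
    have h0 : τ 0 = k := by
      obtain ⟨m, hm⟩ := hsurj k le_rfl
      rw [hτ m] at hm
      have := hk 0
      have hmd : m * d = 0 := by omega
      rcases Nat.mul_eq_zero.1 hmd with h' | h' <;> omega
    have hd' : d = 1 := by
      obtain ⟨m, hm⟩ := hsurj (k + 1) (by omega)
      rw [hτ m, h0] at hm
      have hmd : m * d = 1 := by omega
      have : d ∣ 1 := Dvd.intro m (by rw [mul_comm] at hmd; omega)
      exact Nat.dvd_one.1 this
    intro m
    rw [hτ m, h0, hd']; ring


/-- `f` fixes all singletons -/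
lemma f_singleton (hf : IsPowerAut {n | k ≤ n} f) {n : ℕ} (hn : k ≤ n) :
    f {n} = {n} := by
  classical
  -- σ on offsets
  have hτex : ∀ m : ℕ, ∃ c, k ≤ c ∧ f {k + m} = {c} := fun m =>
    f_sing_to_sing hf (by omega)
  choose τ hτk hτ using hτex
  obtain ⟨hmaps, hinj, hsurj, hadd⟩ := hf
  have hsing : ∀ m : ℕ, ({k + m} : Finset ℕ) ∈ PS {n | k ≤ n} :=
    fun m => singleton_mem_PS (by omega)
  have hτadd : ∀ m m' : ℕ, τ (k + m + m') = τ m + τ m' := by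
    intro m m'
    have h1 : ({k + m} : Finset ℕ) + {k + m'} = {k + (k + m + m')} := by
      rw [Finset.singleton_add_singleton]; congr 1; omega
    have h2 := hadd _ (hsing m) _ (hsing m')
    rw [h1, hτ (k + m + m'), hτ m, hτ m', Finset.singleton_add_singleton] at h2
    exact Finset.singleton_injective h2
  have hrec : ∀ m, τ m + τ (m + 2) = 2 * τ (m + 1) := by
    intro m
    have h1 := hτadd m (m + 2)
    have h2 := hτadd (m + 1) (m + 1)
    have e : k + (m + 1) + (m + 1) = k + m + (m + 2) := by omega
    rw [e] at h2
    omega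
  have hτinj : ∀ m m', τ m = τ m' → m = m' := by
    intro m m' h
    have : f {k + m} = f {k + m'} := by rw [hτ m, hτ m', h]
    have := hinj _ (hsing m) _ (hsing m') this
    have := Finset.singleton_injective this
    omega
  have hτsurj : ∀ c, k ≤ c → ∃ m, τ m = c := by
    intro c hc
    obtain ⟨X, hX, hfX⟩ := hsurj {c} (singleton_mem_PS hc)
    obtain ⟨n', hn'⟩ := f_sing_of_sing ⟨hmaps, hinj, hsurj, hadd⟩ hX hfX
    subst hn'
    have hkn' : k ≤ n' := (mem_PS'.1 hX).2 n' (by simp)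
    refine ⟨n' - k, ?_⟩
    have e : k + (n' - k) = n' := by omega
    have := hτ (n' - k)
    rw [e, hfX] at this
    exact (Finset.singleton_injective this).symm
  have := affine k τ hrec hτinj hτk hτsurj
  have e : k + (n - k) = n := by omega
  have h := hτ (n - k)
  rw [e, this (n - k), e] at h
  exact h

/-- decomposition by a singleton from below -/
lemma singleton_decomp {c : ℕ} (hc : k ≤ c) {W : Finset ℕ}
    (hW : W ∈ PS {n | k ≤ n}) (h : ∀ w ∈ W, c + k ≤ w) :
    ∃ Y ∈ PS {n | k ≤ n}, ({c} : Finset ℕ) + Y = W := by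
  obtain ⟨hne, hk⟩ := mem_PS'.1 hW
  refine ⟨W.image (· - c), mem_PS'.2 ⟨hne.image _, ?_⟩, ?_⟩
  · intro n hn
    rw [Finset.mem_image] at hn
    obtain ⟨w, hw, rfl⟩ := hn
    have := h w hw; omega
  · ext p
    constructor
    · intro hp
      rw [Finset.mem_add] at hp
      obtain ⟨x, hx, y, hy, rfl⟩ := hp
      rw [Finset.mem_singleton] at hx
      rw [Finset.mem_image] at hy
      obtain ⟨w, hw, rfl⟩ := hy
      have := h w hw
      have e : x + (w - c) = w := by omega
      rw [e]; exact hw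
    · intro hp
      rw [Finset.mem_add]
      exact ⟨c, Finset.mem_singleton_self c, p - c,
        Finset.mem_image.2 ⟨p, hp, rfl⟩, by have := h p hp; omega⟩

lemma min'_congr {X Y : Finset ℕ} (hX : X.Nonempty) (h : X = Y) :
    X.min' hX = Y.min' (h ▸ hX) := by subst h; rfl

lemma max'_congr {X Y : Finset ℕ} (hX : X.Nonempty) (h : X = Y) :
    X.max' hX = Y.max' (h ▸ hX) := by subst h; rfl

lemma ps_nonempty {X : Finset ℕ} (hX : X ∈ PS {n | k ≤ n}) : X.Nonempty :=
  (mem_PS'.1 hX).1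

/-- `f` preserves the minimum -/
lemma min_preserved (hf : IsPowerAut {n | k ≤ n} f) {X : Finset ℕ}
    (hX : X ∈ PS {n | k ≤ n}) :
    (f X).min' (ps_nonempty (hf.1 _ hX)) = X.min' (ps_nonempty hX) := by
  obtain ⟨hmaps, hinj, hsurj, hadd⟩ := hf
  have hf' : IsPowerAut {n | k ≤ n} f := ⟨hmaps, hinj, hsurj, hadd⟩
  have hXne := ps_nonempty hX
  have hfXps := hmaps _ hX
  have hfXne := ps_nonempty hfXps
  have hkk : ({k} : Finset ℕ) ∈ PS {n | k ≤ n} := singleton_mem_PS le_rfl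
  have hXk : X + {k} ∈ PS {n | k ≤ n} := add_mem_PS hX hkk
  have hfXk : f (X + {k}) = f X + {k} := by
    rw [hadd _ hX _ hkk, f_singleton hf' le_rfl]
  set a := X.min' hXne with hadef
  have hak : k ≤ a := (mem_PS'.1 hX).2 _ (X.min'_mem hXne)
  set c := (f X).min' hfXne with hcdef
  have hck : k ≤ c := (mem_PS'.1 hfXps).2 _ ((f X).min'_mem hfXne)
  have hsk : ({k} : Finset ℕ).Nonempty := ⟨k, by simp⟩
  have hminXk : (X + {k}).min' (hXne.add hsk) = a + k := by
    have e : ({k} : Finset ℕ).min' hsk = k := min'_eq hsk (by simp) (by simp)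
    rw [min'_add hXne hsk, e]
  -- lower bound: a ≤ c
  have hge : a ≤ c := by
    obtain ⟨Y, hY, hYeq⟩ := singleton_decomp hak hXk (by
      intro w hw
      rw [Finset.mem_add] at hw
      obtain ⟨x, hx, y, hy, rfl⟩ := hw
      rw [Finset.mem_singleton] at hy
      have := Finset.min'_le X x hx
      omega)
    have h1 : f X + {k} = {a} + f Y := by
      rw [← hfXk, ← hYeq, hadd _ (singleton_mem_PS hak) _ hY,
        f_singleton hf' hak]
    have hfYne := ps_nonempty (hmaps _ hY)
    have hfYk : k ≤ (f Y).min' hfYne :=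
      (mem_PS'.1 (hmaps _ hY)).2 _ ((f Y).min'_mem hfYne)
    have h2 : c + k = a + (f Y).min' hfYne := by
      have lhs := min'_add hfXne hsk
      have rhs := min'_add (⟨a, by simp⟩ : ({a} : Finset ℕ).Nonempty) hfYne
      rw [show (({k} : Finset ℕ).min' hsk) = k from min'_eq hsk (by simp) (by simp)] at lhs
      rw [show (({a} : Finset ℕ).min' ⟨a, by simp⟩) = a from min'_eq _ (by simp) (by simp)] at rhs
      have e := min'_congr (hfXne.add hsk) h1
      exact lhs.symm.trans (e.trans rhs)
    omega
  -- upper bound: c ≤ a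
  have hle : c ≤ a := by
    obtain ⟨Y, hY, hYeq⟩ := singleton_decomp hck (add_mem_PS hfXps hkk) (by
      intro w hw
      rw [Finset.mem_add] at hw
      obtain ⟨x, hx, y, hy, rfl⟩ := hw
      rw [Finset.mem_singleton] at hy
      have := Finset.min'_le (f X) x hx
      omega)
    obtain ⟨Y0, hY0, rfl⟩ := hsurj Y hY
    have h1 : f ({c} + Y0) = f (X + {k}) := by
      rw [hadd _ (singleton_mem_PS hck) _ hY0, f_singleton hf' hck, hYeq, hfXk]
    have h2 := hinj _ (add_mem_PS (singleton_mem_PS hck) hY0) _ hXk h1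
    have hY0ne := ps_nonempty hY0
    have hcs : ({c} : Finset ℕ).Nonempty := ⟨c, by simp⟩
    have h3 : c + Y0.min' hY0ne = a + k := by
      have lhs := min'_add hcs hY0ne
      rw [show (({c} : Finset ℕ).min' hcs) = c from min'_eq _ (by simp) (by simp)] at lhs
      have e := min'_congr (hcs.add hY0ne) h2
      exact lhs.symm.trans (e.trans hminXk)
    have hY0k : k ≤ Y0.min' hY0ne := (mem_PS'.1 hY0).2 _ (Y0.min'_mem hY0ne)
    omega
  omega


/-- the "same long-interval sum" relation -/
def Rel (k : ℕ) (X Y : Finset ℕ) : Prop := ∃ W ∈ PS {n | k ≤ n}, X + W = Y + W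

lemma Icc_min' {a b : ℕ} (h : a ≤ b) :
    (Finset.Icc a b).min' ⟨a, Finset.mem_Icc.2 ⟨le_rfl, h⟩⟩ = a :=
  min'_eq _ (Finset.mem_Icc.2 ⟨le_rfl, h⟩) (fun x hx => (Finset.mem_Icc.1 hx).1)

lemma Icc_max' {a b : ℕ} (h : a ≤ b) :
    (Finset.Icc a b).max' ⟨a, Finset.mem_Icc.2 ⟨le_rfl, h⟩⟩ = b :=
  max'_eq _ (Finset.mem_Icc.2 ⟨h, le_rfl⟩) (fun x hx => (Finset.mem_Icc.1 hx).2)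

lemma rel_of_min_max {X Y : Finset ℕ} (hX : X ∈ PS {n | k ≤ n})
    (hY : Y ∈ PS {n | k ≤ n})
    (hmin : X.min' (ps_nonempty hX) = Y.min' (ps_nonempty hY))
    (hmax : X.max' (ps_nonempty hX) = Y.max' (ps_nonempty hY)) : Rel k X Y := by
  have hXne := ps_nonempty hX
  have hYne := ps_nonempty hY
  set a := X.min' hXne with hadef
  set b := X.max' hXne with hbdef
  have hab : a ≤ b := Finset.min'_le _ _ (X.max'_mem hXne)
  refine ⟨Finset.Icc k (k + (b - a)), Icc_mem_PS le_rfl (by omega), ?_⟩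
  rw [add_Icc (X.min'_mem hXne) (X.max'_mem hXne)
      (fun x hx => ⟨Finset.min'_le _ _ hx, Finset.le_max' _ _ hx⟩) (by omega)]
  rw [add_Icc (a := a) (b := b) (by rw [hmin]; exact Y.min'_mem hYne)
      (by rw [hmax]; exact Y.max'_mem hYne)
      (fun x hx => ⟨by rw [hmin]; exact Finset.min'_le _ _ hx,
        by rw [hmax]; exact Finset.le_max' _ _ hx⟩) (by omega)]

lemma rel_min_max {X Y : Finset ℕ} (hX : X ∈ PS {n | k ≤ n})
    (hY : Y ∈ PS {n | k ≤ n}) (h : Rel k X Y) :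
    X.min' (ps_nonempty hX) = Y.min' (ps_nonempty hY) ∧
    X.max' (ps_nonempty hX) = Y.max' (ps_nonempty hY) := by
  obtain ⟨W, hW, hsum⟩ := h
  have hXne := ps_nonempty hX
  have hYne := ps_nonempty hY
  have hWne := ps_nonempty hW
  have h1 := min'_add hXne hWne
  have h2 := min'_add hYne hWne
  have h3 := max'_add hXne hWne
  have h4 := max'_add hYne hWne
  have e1 := min'_congr (hXne.add hWne) hsum
  have e2 := max'_congr (hXne.add hWne) hsum
  constructor
  · have := h1.symm.trans (e1.trans h2)
    omega
  · have := h3.symm.trans (e2.trans h4)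
    omega

lemma rel_iff_rel_f (hf : IsPowerAut {n | k ≤ n} f) {X Y : Finset ℕ}
    (hX : X ∈ PS {n | k ≤ n}) (hY : Y ∈ PS {n | k ≤ n}) :
    Rel k X Y ↔ Rel k (f X) (f Y) := by
  obtain ⟨hmaps, hinj, hsurj, hadd⟩ := hf
  constructor
  · rintro ⟨W, hW, hsum⟩
    exact ⟨f W, hmaps _ hW, by rw [← hadd _ hX _ hW, ← hadd _ hY _ hW, hsum]⟩
  · rintro ⟨W, hW, hsum⟩
    obtain ⟨W0, hW0, rfl⟩ := hsurj W hW
    rw [← hadd _ hX _ hW0, ← hadd _ hY _ hW0] at hsum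
    exact ⟨W0, hW0, hinj _ (add_mem_PS hX hW0) _ (add_mem_PS hY hW0) hsum⟩

lemma Icc_k_mem (k m : ℕ) : Finset.Icc k (k + m) ∈ PS {n | k ≤ n} :=
  Icc_mem_PS le_rfl (by omega)

/-- `max'` of the image of the canonical interval of diameter `m` -/
noncomputable def gmax (k : ℕ) (f : Finset ℕ → Finset ℕ)
    (hf : IsPowerAut {n | k ≤ n} f) (m : ℕ) : ℕ :=
  (f (Finset.Icc k (k + m))).max' (ps_nonempty (hf.1 _ (Icc_k_mem k m)))

lemma gmax_transfer (hf : IsPowerAut {n | k ≤ n} f) {X : Finset ℕ}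
    (hX : X ∈ PS {n | k ≤ n}) {m : ℕ}
    (hmin : X.min' (ps_nonempty hX) = k)
    (hmax : X.max' (ps_nonempty hX) = k + m) :
    (f X).max' (ps_nonempty (hf.1 _ hX)) = gmax k f hf m := by
  have hI := Icc_k_mem k m
  have hrel : Rel k X (Finset.Icc k (k + m)) := by
    apply rel_of_min_max hX hI
    · rw [hmin]
      exact (Icc_min' (by omega)).symm
    · rw [hmax]
      exact (Icc_max' (by omega)).symm
  have := (rel_iff_rel_f hf hX hI).1 hrel
  exact (rel_min_max (hf.1 _ hX) (hf.1 _ hI) this).2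

lemma gmax_zero (hf : IsPowerAut {n | k ≤ n} f) : gmax k f hf 0 = k := by
  unfold gmax
  have e : Finset.Icc k (k + 0) = {k} := by
    rw [Nat.add_zero, Finset.Icc_self]
  have e2 : f (Finset.Icc k (k + 0)) = {k} := by
    rw [e]; exact f_singleton hf le_rfl
  have := max'_congr (ps_nonempty (hf.1 _ (Icc_k_mem k 0))) e2
  rw [this]
  exact max'_eq _ (by simp) (by simp)

lemma gmax_ge (hf : IsPowerAut {n | k ≤ n} f) (m : ℕ) : k ≤ gmax k f hf m := by
  have h := hf.1 _ (Icc_k_mem k m)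
  exact (mem_PS'.1 h).2 _ (Finset.max'_mem _ _)

lemma Icc_bounds {a b x : ℕ} (hx : x ∈ Finset.Icc a b) : a ≤ x ∧ x ≤ b :=
  Finset.mem_Icc.1 hx

lemma gmax_rec (hf : IsPowerAut {n | k ≤ n} f) (m : ℕ) :
    gmax k f hf m + gmax k f hf (m + 2) = 2 * gmax k f hf (m + 1) := by
  obtain ⟨hmaps, hinj, hsurj, hadd⟩ := hf
  have hI1 := Icc_k_mem k m
  have hI2 := Icc_k_mem k (m + 2)
  have hI3 := Icc_k_mem k (m + 1)
  have hmem : ∀ j : ℕ, k ∈ Finset.Icc k (k + j) := fun j => Finset.mem_Icc.2 ⟨le_rfl, by omega⟩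
  have hmem' : ∀ j : ℕ, k + j ∈ Finset.Icc k (k + j) := fun j => Finset.mem_Icc.2 ⟨by omega, le_rfl⟩
  have e1 : Finset.Icc k (k + m) + Finset.Icc k (k + (m + 2)) = Finset.Icc (2*k) (2*k + (2*m + 2)) := by
    rw [add_Icc (hmem m) (hmem' m) (fun x hx => Icc_bounds hx) (by omega)]
    congr 1 <;> omega
  have e2 : Finset.Icc k (k + (m+1)) + Finset.Icc k (k + (m + 1)) = Finset.Icc (2*k) (2*k + (2*m + 2)) := by
    rw [add_Icc (hmem (m+1)) (hmem' (m+1)) (fun x hx => Icc_bounds hx) (by omega)]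
    congr 1 <;> omega
  have eq12 : f (Finset.Icc k (k + m) + Finset.Icc k (k + (m + 2)))
      = f (Finset.Icc k (k + (m+1)) + Finset.Icc k (k + (m + 1))) := by
    rw [e1, e2]
  rw [hadd _ hI1 _ hI2, hadd _ hI3 _ hI3] at eq12
  have hn1 := ps_nonempty (hmaps _ hI1)
  have hn2 := ps_nonempty (hmaps _ hI2)
  have hn3 := ps_nonempty (hmaps _ hI3)
  have h1 := max'_add hn1 hn2
  have h2 := max'_add hn3 hn3
  have e := max'_congr (hn1.add hn2) eq12
  have := h1.symm.trans (e.trans h2)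
  unfold gmax
  omega

lemma gmax_eq (hf : IsPowerAut {n | k ≤ n} f) (m : ℕ) : gmax k f hf m = k + m := by
  apply affine k (gmax k f hf) (gmax_rec hf) _ (gmax_ge hf)
  · -- surjectivity
    intro n hn
    obtain ⟨X, hX, hfX⟩ := hf.2.2.1 (Finset.Icc k n) (Icc_mem_PS le_rfl hn)
    have hXne := ps_nonempty hX
    have hmin : X.min' hXne = k := by
      have h1 := min_preserved hf hX
      have e := min'_congr (ps_nonempty (hf.1 _ hX)) hfX
      rw [e] at h1
      rw [← h1]
      exact Icc_min' hn
    have hmaxge : k ≤ X.max' hXne := by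
      have := Finset.min'_le X _ (X.max'_mem hXne)
      omega
    refine ⟨X.max' hXne - k, ?_⟩
    have := gmax_transfer hf hX hmin (m := X.max' hXne - k) (by omega)
    rw [← this]
    have e := max'_congr (ps_nonempty (hf.1 _ hX)) hfX
    rw [e]
    exact Icc_max' hn
  · -- injectivity
    intro m m' h
    have hI := Icc_k_mem k m
    have hI' := Icc_k_mem k m'
    have t1 := gmax_transfer hf hI (Icc_min' (by omega)) (Icc_max' (by omega))
    have t2 := gmax_transfer hf hI' (Icc_min' (by omega)) (Icc_max' (by omega))
    have hmax : (f (Finset.Icc k (k+m))).max' (ps_nonempty (hf.1 _ hI))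
        = (f (Finset.Icc k (k+m'))).max' (ps_nonempty (hf.1 _ hI')) := by
      rw [t1, t2, h]
    have hmin : (f (Finset.Icc k (k+m))).min' (ps_nonempty (hf.1 _ hI))
        = (f (Finset.Icc k (k+m'))).min' (ps_nonempty (hf.1 _ hI')) := by
      rw [min_preserved hf hI, min_preserved hf hI', Icc_min' (by omega), Icc_min' (by omega)]
    have hrel := rel_of_min_max (hf.1 _ hI) (hf.1 _ hI') hmin hmax
    have := (rel_iff_rel_f hf hI hI').2 hrel
    have := (rel_min_max hI hI' this).2
    rw [Icc_max' (by omega), Icc_max' (by omega)] at this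
    omega

/-- `f` preserves the maximum of sets whose minimum is `k` -/
lemma max_preserved_k (hf : IsPowerAut {n | k ≤ n} f) {X : Finset ℕ}
    (hX : X ∈ PS {n | k ≤ n}) (hmin : X.min' (ps_nonempty hX) = k) :
    (f X).max' (ps_nonempty (hf.1 _ hX)) = X.max' (ps_nonempty hX) := by
  have hXne := ps_nonempty hX
  have hge : k ≤ X.max' hXne := by
    have := Finset.min'_le X _ (X.max'_mem hXne)
    omega
  have := gmax_transfer hf hX hmin (m := X.max' hXne - k) (by omega)
  rw [this, gmax_eq hf]
  omega


/-- the key invariant: existence of a failure of cancellation with witness of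
minimum `k` and maximum `k + D` -/
def E (k : ℕ) (X : Finset ℕ) (D : ℕ) : Prop :=
  ∃ Y ∈ PS {n | k ≤ n}, ∃ Z ∈ PS {n | k ≤ n},
    Y ≠ Z ∧ X + Y = X + Z ∧ k ∈ Y ∧ k + D ∈ Y ∧ ∀ y ∈ Y, y ≤ k + D

lemma E_transfer (hf : IsPowerAut {n | k ≤ n} f) {X : Finset ℕ}
    (hX : X ∈ PS {n | k ≤ n}) {D : ℕ} : E k X D ↔ E k (f X) D := by
  constructor
  · rintro ⟨Y, hY, Z, hZ, hne, hsum, hkY, hkDY, hbY⟩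
    have hYne := ps_nonempty hY
    have hminY : Y.min' hYne = k := min'_eq _ hkY ((mem_PS'.1 hY).2)
    have hmaxY : Y.max' hYne = k + D := max'_eq _ hkDY hbY
    have hfY := hf.1 _ hY
    have hfYne := ps_nonempty hfY
    have hminfY : (f Y).min' hfYne = k := (min_preserved hf hY).trans hminY
    have hmaxfY : (f Y).max' hfYne = k + D :=
      (max_preserved_k hf hY hminY).trans hmaxY
    refine ⟨f Y, hfY, f Z, hf.1 _ hZ, ?_, ?_, ?_, ?_, ?_⟩
    · intro h
      exact hne (hf.2.1 _ hY _ hZ h)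
    · rw [← hf.2.2.2 _ hX _ hY, ← hf.2.2.2 _ hX _ hZ, hsum]
    · rw [← hminfY]; exact (f Y).min'_mem hfYne
    · rw [← hmaxfY]; exact (f Y).max'_mem hfYne
    · intro y hy
      have := Finset.le_max' _ _ hy
      omega
  · rintro ⟨Y', hY', Z', hZ', hne, hsum, hkY, hkDY, hbY⟩
    obtain ⟨Y, hY, rfl⟩ := hf.2.2.1 _ hY'
    obtain ⟨Z, hZ, rfl⟩ := hf.2.2.1 _ hZ'
    have hYne := ps_nonempty hY
    have hfYne := ps_nonempty hY'
    have hminfY : (f Y).min' hfYne = k := min'_eq _ hkY ((mem_PS'.1 hY').2)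
    have hmaxfY : (f Y).max' hfYne = k + D := max'_eq _ hkDY hbY
    have hminY : Y.min' hYne = k := (min_preserved hf hY).symm.trans hminfY
    have hmaxY : Y.max' hYne = k + D :=
      (max_preserved_k hf hY hminY).symm.trans hmaxfY
    refine ⟨Y, hY, Z, hZ, ?_, ?_, ?_, ?_, ?_⟩
    · rintro rfl; exact hne rfl
    · have h1 : f (X + Y) = f (X + Z) := by
        rw [hf.2.2.2 _ hX _ hY, hf.2.2.2 _ hX _ hZ, hsum]
      exact hf.2.1 _ (add_mem_PS hX hY) _ (add_mem_PS hX hZ) h1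
    · rw [← hminY]; exact Y.min'_mem hYne
    · rw [← hmaxY]; exact Y.max'_mem hYne
    · intro y hy
      have := Finset.le_max' _ _ hy
      omega

lemma A_mem_PS (k : ℕ) : ({k, k + 2, k + 3} : Finset ℕ) ∈ PS {n | k ≤ n} := by
  refine mem_PS'.2 ⟨⟨k, by simp⟩, ?_⟩
  intro n hn
  simp only [Finset.mem_insert, Finset.mem_singleton] at hn
  omega

lemma notE_A2 (k : ℕ) : ¬ E k ({k, k + 2, k + 3} : Finset ℕ) 2 := by
  rintro ⟨Y, hY, Z, hZ, hne, hsum, hkY, hk2Y, hbY⟩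
  set A := ({k, k + 2, k + 3} : Finset ℕ) with hAdef
  have hA := A_mem_PS k
  have hAne := ps_nonempty hA
  have hYne := ps_nonempty hY
  have hZne := ps_nonempty hZ
  have hminY : Y.min' hYne = k := min'_eq _ hkY ((mem_PS'.1 hY).2)
  have hmaxY : Y.max' hYne = k + 2 := max'_eq _ hk2Y hbY
  -- transfer min/max to Z
  have m1 := min'_add hAne hYne
  have m2 := min'_add hAne hZne
  have em := min'_congr (hAne.add hYne) hsum
  have M1 := max'_add hAne hYne
  have M2 := max'_add hAne hZne
  have eM := max'_congr (hAne.add hYne) hsum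
  have hmm := m1.symm.trans (em.trans m2)
  have hMM := M1.symm.trans (eM.trans M2)
  have hminZ : Z.min' hZne = k := by omega
  have hmaxZ : Z.max' hZne = k + 2 := by omega
  have hkZ : k ∈ Z := by rw [← hminZ]; exact Z.min'_mem hZne
  have hk2Z : k + 2 ∈ Z := by rw [← hmaxZ]; exact Z.max'_mem hZne
  have hbZ : ∀ z ∈ Z, z ≤ k + 2 := by
    intro z hz; have := Finset.le_max' _ _ hz; omega
  have crit : ∀ W ∈ PS {n | k ≤ n}, (∀ w ∈ W, w ≤ k + 2) →
      (2 * k + 1 ∈ A + W ↔ k + 1 ∈ W) := by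
    intro W hW hb
    constructor
    · intro h
      rw [Finset.mem_add] at h
      obtain ⟨x, hx, y, hy, hxy⟩ := h
      simp only [hAdef, Finset.mem_insert, Finset.mem_singleton] at hx
      have h1 := (mem_PS'.1 hW).2 y hy
      have h2 := hb y hy
      have : y = k + 1 := by omega
      rwa [← this]
    · intro h
      rw [Finset.mem_add]
      exact ⟨k, by simp [hAdef], k + 1, h, by omega⟩
  have cY := crit Y hY hbY
  have cZ := crit Z hZ hbZ
  rw [hsum] at cY
  have hiff : k + 1 ∈ Y ↔ k + 1 ∈ Z := cY.symm.trans cZ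
  apply hne
  ext n
  constructor
  · intro hn
    have h1 := (mem_PS'.1 hY).2 n hn
    have h2 := hbY n hn
    rcases (by omega : n = k ∨ n = k + 1 ∨ n = k + 2) with rfl | rfl | rfl
    · exact hkZ
    · exact hiff.1 hn
    · exact hk2Z
  · intro hn
    have h1 := (mem_PS'.1 hZ).2 n hn
    have h2 := hbZ n hn
    rcases (by omega : n = k ∨ n = k + 1 ∨ n = k + 2) with rfl | rfl | rfl
    · exact hkY
    · exact hiff.2 hn
    · exact hk2Y

lemma E_A3 (k : ℕ) : E k ({k, k + 2, k + 3} : Finset ℕ) 3 := by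
  refine ⟨{k, k + 1, k + 3}, ?_, Finset.Icc k (k + 3), Icc_mem_PS le_rfl (by omega),
    ?_, ?_, by simp, ?_, ?_⟩
  · refine mem_PS'.2 ⟨⟨k, by simp⟩, ?_⟩
    intro n hn
    simp only [Finset.mem_insert, Finset.mem_singleton] at hn
    omega
  · intro h
    have : k + 2 ∈ ({k, k + 1, k + 3} : Finset ℕ) := by
      rw [h]; rw [Finset.mem_Icc]; omega
    simp only [Finset.mem_insert, Finset.mem_singleton] at this
    omega
  · -- sums agree
    have hZ : ({k, k + 2, k + 3} : Finset ℕ) + Finset.Icc k (k + 3)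
        = Finset.Icc (k + k) (k + 3 + k + 3) := by
      rw [add_Icc (a := k) (b := k + 3) (by simp) (by simp)
        (by intro x hx; simp only [Finset.mem_insert, Finset.mem_singleton] at hx; omega)
        (by omega)]
    have hY : ({k, k + 2, k + 3} : Finset ℕ) + ({k, k + 1, k + 3} : Finset ℕ)
        = Finset.Icc (k + k) (k + 3 + k + 3) := by
      ext n
      rw [Finset.mem_add, Finset.mem_Icc]
      constructor
      · rintro ⟨x, hx, y, hy, rfl⟩
        simp only [Finset.mem_insert, Finset.mem_singleton] at hx hy
        omega
      · intro hn
        rcases (by omega : n = k + k ∨ n = k + k + 1 ∨ n = k + k + 2 ∨ n = k + k + 3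
            ∨ n = k + k + 4 ∨ n = k + k + 5 ∨ n = k + k + 6)
          with rfl | rfl | rfl | rfl | rfl | rfl | rfl
        · exact ⟨k, by simp, k, by simp, by omega⟩
        · exact ⟨k, by simp, k + 1, by simp, by omega⟩
        · exact ⟨k + 2, by simp, k, by simp, by omega⟩
        · exact ⟨k + 2, by simp, k + 1, by simp, by omega⟩
        · exact ⟨k + 3, by simp, k + 1, by simp, by omega⟩
        · exact ⟨k + 2, by simp, k + 3, by simp, by omega⟩
        · exact ⟨k + 3, by simp, k + 3, by simp, by omega⟩
    rw [hY, hZ]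
  · simp
  · intro y hy
    simp only [Finset.mem_insert, Finset.mem_singleton] at hy
    omega

lemma notE_C3 (k : ℕ) : ¬ E k ({k, k + 3} : Finset ℕ) 3 := by
  rintro ⟨Y, hY, Z, hZ, hne, hsum, hkY, hk3Y, hbY⟩
  have hC : ({k, k + 3} : Finset ℕ) ∈ PS {n | k ≤ n} := by
    refine mem_PS'.2 ⟨⟨k, by simp⟩, ?_⟩
    intro n hn
    simp only [Finset.mem_insert, Finset.mem_singleton] at hn
    omega
  set C := ({k, k + 3} : Finset ℕ) with hCdef
  have hCne := ps_nonempty hC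
  have hYne := ps_nonempty hY
  have hZne := ps_nonempty hZ
  have hminY : Y.min' hYne = k := min'_eq _ hkY ((mem_PS'.1 hY).2)
  have hmaxY : Y.max' hYne = k + 3 := max'_eq _ hk3Y hbY
  have m1 := min'_add hCne hYne
  have m2 := min'_add hCne hZne
  have em := min'_congr (hCne.add hYne) hsum
  have M1 := max'_add hCne hYne
  have M2 := max'_add hCne hZne
  have eM := max'_congr (hCne.add hYne) hsum
  have hmm := m1.symm.trans (em.trans m2)
  have hMM := M1.symm.trans (eM.trans M2)
  have hminZ : Z.min' hZne = k := by omega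
  have hmaxZ : Z.max' hZne = k + 3 := by omega
  have hkZ : k ∈ Z := by rw [← hminZ]; exact Z.min'_mem hZne
  have hk3Z : k + 3 ∈ Z := by rw [← hmaxZ]; exact Z.max'_mem hZne
  have hbZ : ∀ z ∈ Z, z ≤ k + 3 := by
    intro z hz; have := Finset.le_max' _ _ hz; omega
  have crit : ∀ j, j = 1 ∨ j = 2 → ∀ W ∈ PS {n | k ≤ n}, (∀ w ∈ W, w ≤ k + 3) →
      (2 * k + j ∈ C + W ↔ k + j ∈ W) := by
    intro j hj W hW hb
    constructor
    · intro h
      rw [Finset.mem_add] at h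
      obtain ⟨x, hx, y, hy, hxy⟩ := h
      simp only [hCdef, Finset.mem_insert, Finset.mem_singleton] at hx
      have h1 := (mem_PS'.1 hW).2 y hy
      have h2 := hb y hy
      have : y = k + j := by omega
      rwa [← this]
    · intro h
      rw [Finset.mem_add]
      exact ⟨k, by simp [hCdef], k + j, h, by omega⟩
  have cY1 := crit 1 (Or.inl rfl) Y hY hbY
  have cZ1 := crit 1 (Or.inl rfl) Z hZ hbZ
  rw [hsum] at cY1
  have hiff1 : k + 1 ∈ Y ↔ k + 1 ∈ Z := cY1.symm.trans cZ1
  have cY2 := crit 2 (Or.inr rfl) Y hY hbY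
  have cZ2 := crit 2 (Or.inr rfl) Z hZ hbZ
  rw [hsum] at cY2
  have hiff2 : k + 2 ∈ Y ↔ k + 2 ∈ Z := cY2.symm.trans cZ2
  apply hne
  ext n
  constructor
  · intro hn
    have h1 := (mem_PS'.1 hY).2 n hn
    have h2 := hbY n hn
    rcases (by omega : n = k ∨ n = k + 1 ∨ n = k + 2 ∨ n = k + 3) with rfl | rfl | rfl | rfl
    · exact hkZ
    · exact hiff1.1 hn
    · exact hiff2.1 hn
    · exact hk3Z
  · intro hn
    have h1 := (mem_PS'.1 hZ).2 n hn
    have h2 := hbZ n hn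
    rcases (by omega : n = k ∨ n = k + 1 ∨ n = k + 2 ∨ n = k + 3) with rfl | rfl | rfl | rfl
    · exact hkY
    · exact hiff1.2 hn
    · exact hiff2.2 hn
    · exact hk3Y

lemma E_I2 (k : ℕ) : E k (Finset.Icc k (k + 3)) 2 := by
  refine ⟨{k, k + 2}, ?_, Finset.Icc k (k + 2), Icc_mem_PS le_rfl (by omega),
    ?_, ?_, by simp, by simp, ?_⟩
  · refine mem_PS'.2 ⟨⟨k, by simp⟩, ?_⟩
    intro n hn
    simp only [Finset.mem_insert, Finset.mem_singleton] at hn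
    omega
  · intro h
    have : k + 1 ∈ ({k, k + 2} : Finset ℕ) := by
      rw [h]; rw [Finset.mem_Icc]; omega
    simp only [Finset.mem_insert, Finset.mem_singleton] at this
    omega
  · have h1 : ({k, k + 2} : Finset ℕ) + Finset.Icc k (k + 3)
        = Finset.Icc (k + k) (k + 2 + k + 3) := by
      rw [add_Icc (a := k) (b := k + 2) (by simp) (by simp)
        (by intro x hx; simp only [Finset.mem_insert, Finset.mem_singleton] at hx; omega)
        (by omega)]
    have h2 : Finset.Icc k (k + 2) + Finset.Icc k (k + 3)
        = Finset.Icc (k + k) (k + 2 + k + 3) := by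
      rw [add_Icc (a := k) (b := k + 2) (by rw [Finset.mem_Icc]; omega)
        (by rw [Finset.mem_Icc]; omega)
        (by intro x hx; rw [Finset.mem_Icc] at hx; omega)
        (by omega)]
    rw [add_comm (Finset.Icc k (k + 3)) ({k, k + 2} : Finset ℕ),
      add_comm (Finset.Icc k (k + 3)) (Finset.Icc k (k + 2)), h1, h2]
  · intro y hy
    simp only [Finset.mem_insert, Finset.mem_singleton] at hy
    omega

end Stmt14


/-- For `S = [k, ∞)` and `f` an automorphism of `P(S)`, `f {k, k+2, k+3}` is
either `{k, k+2, k+3}` or `{k, k+1, k+3}`. -/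
theorem stmt14 (k : ℕ) (S : Set ℕ) (hS : S = {n : ℕ | k ≤ n})
    (f : Finset ℕ → Finset ℕ) (hf : IsPowerAut S f) :
    f ({k, k + 2, k + 3} : Finset ℕ) = ({k, k + 2, k + 3} : Finset ℕ) ∨
    f ({k, k + 2, k + 3} : Finset ℕ) = ({k, k + 1, k + 3} : Finset ℕ) := by
  subst hS
  have hA : ({k, k + 2, k + 3} : Finset ℕ) ∈ PS {n : ℕ | k ≤ n} := Stmt14.A_mem_PS k
  have hB := hf.1 _ hA
  have hBne := Stmt14.ps_nonempty hB
  have hAne := Stmt14.ps_nonempty hA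
  have hminA : ({k, k + 2, k + 3} : Finset ℕ).min' hAne = k :=
    Stmt14.min'_eq _ (by simp) (by
      intro x hx
      simp only [Finset.mem_insert, Finset.mem_singleton] at hx
      omega)
  have hmaxA : ({k, k + 2, k + 3} : Finset ℕ).max' hAne = k + 3 :=
    Stmt14.max'_eq _ (by simp) (by
      intro x hx
      simp only [Finset.mem_insert, Finset.mem_singleton] at hx
      omega)
  have hminB : (f {k, k + 2, k + 3}).min' hBne = k :=
    (Stmt14.min_preserved hf hA).trans hminA
  have hmaxB : (f {k, k + 2, k + 3}).max' hBne = k + 3 :=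
    (Stmt14.max_preserved_k hf hA hminA).trans hmaxA
  have hkB : k ∈ f {k, k + 2, k + 3} := by
    have h := Finset.min'_mem _ hBne
    rwa [hminB] at h
  have hk3B : k + 3 ∈ f {k, k + 2, k + 3} := by
    have h := Finset.max'_mem _ hBne
    rwa [hmaxB] at h
  have hBub : ∀ b ∈ f {k, k + 2, k + 3}, b ≤ k + 3 := by
    intro b hb
    have := Finset.le_max' _ _ hb
    omega
  have hBlb : ∀ b ∈ f {k, k + 2, k + 3}, k ≤ b := (Stmt14.mem_PS'.1 hB).2
  have hE3 : Stmt14.E k (f {k, k + 2, k + 3}) 3 :=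
    (Stmt14.E_transfer hf hA).1 (Stmt14.E_A3 k)
  have hnE2 : ¬ Stmt14.E k (f {k, k + 2, k + 3}) 2 :=
    fun h => Stmt14.notE_A2 k ((Stmt14.E_transfer hf hA).2 h)
  by_cases h1 : k + 1 ∈ f {k, k + 2, k + 3} <;>
    by_cases h2 : k + 2 ∈ f {k, k + 2, k + 3}
  · exfalso
    have hBI : f {k, k + 2, k + 3} = Finset.Icc k (k + 3) := by
      ext n
      rw [Finset.mem_Icc]
      constructor
      · intro hn; exact ⟨hBlb n hn, hBub n hn⟩
      · intro hn
        rcases (by omega : n = k ∨ n = k + 1 ∨ n = k + 2 ∨ n = k + 3)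
          with rfl | rfl | rfl | rfl
        exacts [hkB, h1, h2, hk3B]
    rw [hBI] at hnE2
    exact hnE2 (Stmt14.E_I2 k)
  · right
    ext n
    simp only [Finset.mem_insert, Finset.mem_singleton]
    constructor
    · intro hn
      have hl := hBlb n hn
      have hu := hBub n hn
      rcases (by omega : n = k ∨ n = k + 1 ∨ n = k + 2 ∨ n = k + 3)
        with rfl | rfl | rfl | rfl
      · omega
      · omega
      · exact absurd hn h2
      · omega
    · intro hn
      rcases hn with rfl | rfl | rfl
      exacts [hkB, h1, hk3B]
  · left
    ext n
    simp only [Finset.mem_insert, Finset.mem_singleton]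
    constructor
    · intro hn
      have hl := hBlb n hn
      have hu := hBub n hn
      rcases (by omega : n = k ∨ n = k + 1 ∨ n = k + 2 ∨ n = k + 3)
        with rfl | rfl | rfl | rfl
      · omega
      · exact absurd hn h1
      · omega
      · omega
    · intro hn
      rcases hn with rfl | rfl | rfl
      exacts [hkB, h2, hk3B]
  · exfalso
    have hBC : f {k, k + 2, k + 3} = ({k, k + 3} : Finset ℕ) := by
      ext n
      simp only [Finset.mem_insert, Finset.mem_singleton]
      constructor
      · intro hn
        have hl := hBlb n hn
        have hu := hBub n hn
        rcases (by omega : n = k ∨ n = k + 1 ∨ n = k + 2 ∨ n = k + 3)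
          with rfl | rfl | rfl | rfl
        · omega
        · exact absurd hn h1
        · exact absurd hn h2
        · omega
      · intro hn
        rcases hn with rfl | rfl
        exacts [hkB, hk3B]
    rw [hBC] at hE3
    exact Stmt14.notE_C3 k hE3
end

section
/- Let S be a numerical semigroup with critical element k and f an automorphism of P(S). Then for every singleton {r} with r ∈ S, f({r}) = {r}. -/
open Pointwise

/-!
Singletons are exactly the cancellable elements of `P(S)`: a set `X` with two elements `x₀ ≠ x₁`
satisfies `X + (X + X) = X + ((X + X) \ {x₀ + x₁})`. Cancellability is preserved by automorphisms
in both directions, so an automorphism `f` induces an additive bijection `φ` of `S` with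
`f {a} = {φ a}`. Comparing `φ (b * a) = φ (a * b)` gives `b * φ a = a * φ b`; applied to two
consecutive elements `m, m + 1` of `S` this forces `φ r = u * r` with `u ∣ m` and `u ∣ m + 1`,
so `u = 1`.
-/

section Cancellation

variable {α : Type*} [AddCancelCommMonoid α] [DecidableEq α]

lemma Finset.singleton_add_right_injective (a : α) :
    Function.Injective fun Y : Finset α => ({a} : Finset α) + Y := by
  have himage (Y : Finset α) : ({a} : Finset α) + Y = Y.image (a + ·) :=
    Finset.image₂_singleton_left
  intro Y Z h
  simp only [himage] at h
  exact Finset.image_injective (add_right_injective a) h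

/-- An element `x + (x₀ + x₁)` is also `x₁ + (x₀ + x₀)` if `x = x₀`, and `x₀ + (x + x₁)`
otherwise. -/
lemma Finset.add_erase_add_eq {X : Finset α} {x₀ x₁ : α} (hx₀ : x₀ ∈ X) (hx₁ : x₁ ∈ X)
    (hne : x₀ ≠ x₁) : X + (X + X).erase (x₀ + x₁) = X + (X + X) := by
  refine (Finset.add_subset_add_left (Finset.erase_subset _ _)).antisymm ?_
  intro z hz
  obtain ⟨x, hx, y, hy, rfl⟩ := Finset.mem_add.1 hz
  by_cases hy' : y = x₀ + x₁
  · subst hy'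
    by_cases hx' : x = x₀
    · subst hx'
      refine Finset.mem_add.2 ⟨x₁, hx₁, x + x, Finset.mem_erase.2 ⟨?_, Finset.add_mem_add hx hx⟩,
        by abel⟩
      simpa using hne
    · refine Finset.mem_add.2 ⟨x₀, hx₀, x + x₁, Finset.mem_erase.2 ⟨?_, Finset.add_mem_add hx hx₁⟩,
        by abel⟩
      simpa using hx'
  · exact Finset.add_mem_add hx (Finset.mem_erase.2 ⟨hy', hy⟩)

end Cancellation

lemma singleton_mem_PS {S : Set ℕ} {a : ℕ} (ha : a ∈ S) : ({a} : Finset ℕ) ∈ PS S :=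
  ⟨Finset.singleton_nonempty a, by simpa using ha⟩

lemma add_mem_PS {S : Set ℕ} (hS : ∀ a ∈ S, ∀ b ∈ S, a + b ∈ S) {X Y : Finset ℕ}
    (hX : X ∈ PS S) (hY : Y ∈ PS S) : X + Y ∈ PS S := by
  refine ⟨hX.1.add hY.1, ?_⟩
  intro z hz
  obtain ⟨x, hx, y, hy, rfl⟩ := Finset.mem_add.1 (Finset.mem_coe.1 hz)
  exact hS x (hX.2 hx) y (hY.2 hy)

def IsCancellable (S : Set ℕ) (X : Finset ℕ) : Prop :=
  ∀ Y ∈ PS S, ∀ Z ∈ PS S, X + Y = X + Z → Y = Z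

lemma isCancellable_singleton (S : Set ℕ) (a : ℕ) : IsCancellable S {a} :=
  fun _ _ _ _ h => Finset.singleton_add_right_injective a h

lemma exists_eq_singleton_of_isCancellable {S : Set ℕ} (hS : ∀ a ∈ S, ∀ b ∈ S, a + b ∈ S)
    {X : Finset ℕ} (hX : X ∈ PS S) (hc : IsCancellable S X) : ∃ a, X = {a} := by
  refine hX.1.exists_eq_singleton_or_nontrivial.resolve_right ?_
  rintro ⟨x₀, hx₀, x₁, hx₁, hne⟩
  have hXX : X + X ∈ PS S := add_mem_PS hS hX hX
  have hsum : x₀ + x₁ ∈ X + X := Finset.add_mem_add hx₀ hx₁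
  have herase : (X + X).erase (x₀ + x₁) ∈ PS S :=
    ⟨⟨x₀ + x₀, Finset.mem_erase.2 ⟨by simpa using hne, Finset.add_mem_add hx₀ hx₀⟩⟩,
      fun _ hy => hXX.2 (Finset.erase_subset _ _ hy)⟩
  have := hc _ herase _ hXX (Finset.add_erase_add_eq hx₀ hx₁ hne)
  exact Finset.erase_eq_self.1 this hsum

namespace IsPowerAut

variable {S : Set ℕ} {f : Finset ℕ → Finset ℕ}

lemma isCancellable_iff (hS : ∀ a ∈ S, ∀ b ∈ S, a + b ∈ S) (hf : IsPowerAut S f)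
    {X : Finset ℕ} (hX : X ∈ PS S) : IsCancellable S (f X) ↔ IsCancellable S X := by
  obtain ⟨hmaps, hinj, hsurj, hadd⟩ := hf
  constructor
  · intro hc Y hY Z hZ h
    refine hinj _ hY _ hZ (hc _ (hmaps _ hY) _ (hmaps _ hZ) ?_)
    rw [← hadd _ hX _ hY, ← hadd _ hX _ hZ, h]
  · rintro hc _ hfY _ hfZ h
    obtain ⟨Y, hY, rfl⟩ := hsurj _ hfY
    obtain ⟨Z, hZ, rfl⟩ := hsurj _ hfZ
    rw [← hadd _ hX _ hY, ← hadd _ hX _ hZ] at h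
    rw [hc _ hY _ hZ (hinj _ (add_mem_PS hS hX hY) _ (add_mem_PS hS hX hZ) h)]

lemma exists_singleton_map (hS : ∀ a ∈ S, ∀ b ∈ S, a + b ∈ S) (hf : IsPowerAut S f) :
    ∃ φ : ℕ → ℕ, (∀ a ∈ S, f {a} = {φ a}) ∧ Set.SurjOn φ S S := by
  have himage : ∀ a ∈ S, ∃ t, f {a} = {t} := fun a ha =>
    exists_eq_singleton_of_isCancellable hS (hf.1 _ (singleton_mem_PS ha))
      ((hf.isCancellable_iff hS (singleton_mem_PS ha)).2 (isCancellable_singleton S a))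
  choose! φ hφ using himage
  refine ⟨φ, hφ, fun t ht => ?_⟩
  obtain ⟨X, hX, hfX⟩ := hf.2.2.1 _ (singleton_mem_PS ht)
  have hc : IsCancellable S X :=
    (hf.isCancellable_iff hS hX).1 (hfX ▸ isCancellable_singleton S t)
  obtain ⟨a, rfl⟩ := exists_eq_singleton_of_isCancellable hS hX hc
  have ha : a ∈ S := hX.2 (by simp)
  exact ⟨a, ha, Finset.singleton_injective ((hφ a ha).symm.trans hfX)⟩

end IsPowerAut

lemma exists_consecutive_mem_of_finite_compl {S : Set ℕ} (hfin : Sᶜ.Finite) :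
    ∃ m, 0 < m ∧ m ∈ S ∧ m + 1 ∈ S := by
  obtain ⟨M, hM⟩ := hfin.bddAbove
  have hmem : ∀ n, M < n → n ∈ S := fun n hn => by
    by_contra h
    exact absurd (hM h) (by omega)
  exact ⟨M + 1, by omega, hmem _ (by omega), hmem _ (by omega)⟩

section AdditiveMap

variable {S : Set ℕ} (hS : ∀ a ∈ S, ∀ b ∈ S, a + b ∈ S)
  {φ : ℕ → ℕ} (hφ : ∀ a ∈ S, ∀ b ∈ S, φ (a + b) = φ a + φ b)
include hS

lemma mul_mem_of_pos {a n : ℕ} (ha : a ∈ S) (hn : 0 < n) : n * a ∈ S := by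
  induction n, hn using Nat.le_induction with
  | base => simpa using ha
  | succ n _ ih => simpa [add_mul] using hS _ ih _ ha

include hφ

lemma map_mul_of_pos {a n : ℕ} (ha : a ∈ S) (hn : 0 < n) : φ (n * a) = n * φ a := by
  induction n, hn using Nat.le_induction with
  | base => simp
  | succ n hn ih =>
    rw [add_mul, one_mul, hφ _ (mul_mem_of_pos hS ha hn) _ ha, ih, add_mul, one_mul]

lemma mul_map_comm {a b : ℕ} (ha : a ∈ S) (hb : b ∈ S) (ha0 : 0 < a) (hb0 : 0 < b) :
    b * φ a = a * φ b := by
  rw [← map_mul_of_pos hS hφ ha hb0, ← map_mul_of_pos hS hφ hb ha0, mul_comm]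

lemma exists_map_eq_mul {m : ℕ} (hm0 : 0 < m) (hm : m ∈ S) (hm1 : m + 1 ∈ S) :
    ∃ u, ∀ r ∈ S, φ r = u * r := by
  have hdvd : m ∣ (m + 1) * φ m := ⟨φ (m + 1), mul_map_comm hS hφ hm hm1 hm0 (by omega)⟩
  have hcop : m.Coprime (m + 1) := Nat.coprime_self_add_right.2 (Nat.coprime_one_right m)
  obtain ⟨u, hu⟩ := hcop.dvd_of_dvd_mul_left hdvd
  refine ⟨u, fun r hr => ?_⟩
  rcases Nat.eq_zero_or_pos r with rfl | hr0
  · simpa using hφ 0 hr 0 hr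
  · refine Nat.eq_of_mul_eq_mul_left hm0 ?_
    rw [mul_map_comm hS hφ hr hm hr0 hm0, hu]
    ring

lemma map_eq_self_of_surjOn {m : ℕ} (hm0 : 0 < m) (hm : m ∈ S) (hm1 : m + 1 ∈ S)
    (hsurj : Set.SurjOn φ S S) {r : ℕ} (hr : r ∈ S) : φ r = r := by
  obtain ⟨u, hu⟩ := exists_map_eq_mul hS hφ hm0 hm hm1
  have hdvd : ∀ t ∈ S, u ∣ t := fun t ht => by
    obtain ⟨a, ha, rfl⟩ := hsurj ht
    exact ⟨a, hu a ha⟩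
  have hu1 : u = 1 := Nat.dvd_one.1 ((Nat.dvd_add_right (hdvd m hm)).1 (hdvd _ hm1))
  rw [hu r hr, hu1, one_mul]

end AdditiveMap

theorem stmt16_general (S : Set ℕ) (hS : IsNumSgp S)
    (f : Finset ℕ → Finset ℕ) (hf : IsPowerAut S f) :
    ∀ r ∈ S, f ({r} : Finset ℕ) = ({r} : Finset ℕ) := by
  obtain ⟨hclosed, hfin⟩ := hS
  obtain ⟨φ, hφ, hsurj⟩ := hf.exists_singleton_map hclosed
  have hφadd : ∀ a ∈ S, ∀ b ∈ S, φ (a + b) = φ a + φ b := fun a ha b hb => by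
    have h := hf.2.2.2 _ (singleton_mem_PS ha) _ (singleton_mem_PS hb)
    rw [Finset.singleton_add_singleton, hφ _ (hclosed a ha b hb), hφ a ha, hφ b hb,
      Finset.singleton_add_singleton] at h
    exact Finset.singleton_injective h
  obtain ⟨m, hm0, hm, hm1⟩ := exists_consecutive_mem_of_finite_compl hfin
  intro r hr
  rw [hφ r hr, map_eq_self_of_surjOn hclosed hφadd hm0 hm hm1 hsurj hr]

/-- An automorphism of `P(S)` fixes every singleton `{r}` with `r ∈ S`. -/
theorem stmt16 (S : Set ℕ) (hS : IsNumSgp S) (k : ℕ) (hk : IsCritical S k)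
    (f : Finset ℕ → Finset ℕ) (hf : IsPowerAut S f) :
    ∀ r ∈ S, f ({r} : Finset ℕ) = ({r} : Finset ℕ) :=
  stmt16_general S hS f hf
end

section
/- Let S be a numerical semigroup with minimum element α_S strictly less than its critical element k, and let m ∈ [α_S, k−2] be such that m ∈ S and m+1 ∉ S. Then the involution σ : X ↦ β(X) − X + α(X) is not well-defined as a map P(S) → P(S); specifically, σ({m, k, k+1}) = {m, m+1, k+1} ⊄ S since m+1 ∉ S. -/
open Pointwise

/-- The map `σ : X ↦ β(X) - X + α(X)`. -/
def sigma (X : Finset ℕ) : Finset ℕ :=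
  if h : X.Nonempty then X.image (fun x => X.max' h - x + X.min' h) else ∅

/-- If `S` has an element `m` with `m + 1 ∉ S` and `m + 2 ≤ k` (so `S` is not a
discrete interval), then `σ` is not well-defined on `P(S)`: indeed
`σ {m, k, k+1} = {m, m+1, k+1}` which is not a subset of `S` since `m + 1 ∉ S`. -/
theorem stmt18 (S : Set ℕ) (hS : IsNumSgp S) (k : ℕ) (hk : IsCritical S k)
    (m : ℕ) (hm : m ∈ S) (hm1 : m + 1 ∉ S) (hmk : m + 2 ≤ k) :
    sigma ({m, k, k + 1} : Finset ℕ) = ({m, m + 1, k + 1} : Finset ℕ) ∧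
    ¬((({m, m + 1, k + 1} : Finset ℕ) : Set ℕ) ⊆ S) := by
  have hmk' : m ≤ k := by omega
  constructor
  · have hne : ({m, k, k + 1} : Finset ℕ).Nonempty := ⟨m, by simp⟩
    have hmax : ({m, k, k + 1} : Finset ℕ).max' hne = k + 1 := by
      apply le_antisymm
      · apply Finset.max'_le; intro y hy; simp at hy; omega
      · apply Finset.le_max'; simp
    have hmin : ({m, k, k + 1} : Finset ℕ).min' hne = m := by
      apply le_antisymm
      · apply Finset.min'_le; simp
      · apply Finset.le_min'; intro y hy; simp at hy; omega
    rw [sigma, dif_pos hne]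
    ext y
    simp only [Finset.mem_image, hmax, hmin, Finset.mem_insert, Finset.mem_singleton]
    constructor
    · rintro ⟨x, hx, rfl⟩
      rcases hx with rfl | rfl | rfl <;> omega
    · rintro (rfl | rfl | rfl)
      · exact ⟨k + 1, by simp, by omega⟩
      · exact ⟨k, by simp, by omega⟩
      · exact ⟨m, by simp, by omega⟩
  · intro h
    exact hm1 (h (by simp))
end
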